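/- arXiv:1511.07851 — 6 statements merged into one kernel-verified Lean document; each statement's English description precedes it below -/
import Mathlib

section
/- Suppose q₁ and q₂ are nonvanishing on U. Then the following are equivalent: (i) q₁·∂₁k₁ + q₂·∂₂k₁ = 0 and q₁·∂₁k₂ + q₂·∂₂k₂ = 0 hold at every point of U; (ii) the function k₁ + k₂ is constant on U. (Proposition 5(a): for a surface which is not a moulding surface, the nets corresponding to the lines of curvature of the two central surfaces are both orthogonal if and only if the surface has constant mean curvature.) -/
/-- Partial derivative in the first coordinate direction on ℝ². -/
noncomputable def pd1 (f : ℝ × ℝ → ℝ) (p : ℝ × ℝ) : ℝ := fderiv ℝ f p (1, 0)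

/-- Partial derivative in the second coordinate direction on ℝ². -/
noncomputable def pd2 (f : ℝ × ℝ → ℝ) (p : ℝ × ℝ) : ℝ := fderiv ℝ f p (0, 1)

/-! After substituting the Codazzi equations `∂₂k₁ = q₁ d`, `∂₁k₂ = q₂ d` (`d = k₁ - k₂`),
the two conditions of (i) factor as `q₁ · ∂₁(k₁ + k₂) = 0` and `q₂ · ∂₂(k₁ + k₂) = 0`.
As `q₁, q₂` do not vanish, (i) says that the gradient of `k₁ + k₂` vanishes on `U`, which on
an open connected set means that `k₁ + k₂` is constant. -/

theorem IsOpen.exists_eq_const_iff_fderiv_eq_zero {E F : Type*} [NormedAddCommGroup E]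
    [NormedSpace ℝ E] [NormedAddCommGroup F] [NormedSpace ℝ F] {U : Set E} (hU : IsOpen U)
    (hUconn : IsPreconnected U) {f : E → F} (hf : ∀ p ∈ U, DifferentiableAt ℝ f p) :
    (∃ c, ∀ p ∈ U, f p = c) ↔ ∀ p ∈ U, fderiv ℝ f p = 0 := by
  constructor
  · rintro ⟨c, hc⟩ p hp
    have hf_const : f =ᶠ[nhds p] fun _ ↦ c := Filter.mem_of_superset (hU.mem_nhds hp) hc
    rw [hf_const.fderiv_eq, fderiv_const_apply]
  · exact fun h ↦ hU.exists_is_const_of_fderiv_eq_zero hUconn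
      (fun p hp ↦ (hf p hp).differentiableWithinAt) h

theorem fderiv_eq_zero_iff_pd1_pd2 {f : ℝ × ℝ → ℝ} {p : ℝ × ℝ} :
    fderiv ℝ f p = 0 ↔ pd1 f p = 0 ∧ pd2 f p = 0 := by
  refine ⟨fun h ↦ by simp [pd1, pd2, h], fun ⟨h₁, h₂⟩ ↦ ?_⟩
  ext
  · simpa [pd1] using h₁
  · simpa [pd2] using h₂

theorem pd1_add {f g : ℝ × ℝ → ℝ} {p : ℝ × ℝ} (hf : DifferentiableAt ℝ f p)
    (hg : DifferentiableAt ℝ g p) : pd1 (f + g) p = pd1 f p + pd1 g p := by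
  simp [pd1, fderiv_add hf hg]

theorem pd2_add {f g : ℝ × ℝ → ℝ} {p : ℝ × ℝ} (hf : DifferentiableAt ℝ f p)
    (hg : DifferentiableAt ℝ g p) : pd2 (f + g) p = pd2 f p + pd2 g p := by
  simp [pd2, fderiv_add hf hg]

theorem orthogonality_iff_sum_eq_zero {q₁ q₂ d a₁ b₂ : ℝ} (hq₁ : q₁ ≠ 0) (hq₂ : q₂ ≠ 0) :
    (q₁ * a₁ + q₂ * (q₁ * d) = 0 ∧ q₁ * (q₂ * d) + q₂ * b₂ = 0) ↔
      (a₁ + q₂ * d = 0 ∧ q₁ * d + b₂ = 0) := by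
  have h₁ : q₁ * a₁ + q₂ * (q₁ * d) = q₁ * (a₁ + q₂ * d) := by ring
  have h₂ : q₁ * (q₂ * d) + q₂ * b₂ = q₂ * (q₁ * d + b₂) := by ring
  rw [h₁, h₂, mul_eq_zero, mul_eq_zero, or_iff_right hq₁, or_iff_right hq₂]

theorem stmt_0_general (U : Set (ℝ × ℝ)) (hU : IsOpen U) (hUconn : IsConnected U)
    (k₁ k₂ q₁ q₂ : ℝ × ℝ → ℝ)
    (hk₁ : ∀ p ∈ U, DifferentiableAt ℝ k₁ p)
    (hk₂ : ∀ p ∈ U, DifferentiableAt ℝ k₂ p)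
    (codazzi₁ : ∀ p ∈ U, pd2 k₁ p = q₁ p * (k₁ p - k₂ p))
    (codazzi₂ : ∀ p ∈ U, pd1 k₂ p = q₂ p * (k₁ p - k₂ p))
    (hq₁ne : ∀ p ∈ U, q₁ p ≠ 0)
    (hq₂ne : ∀ p ∈ U, q₂ p ≠ 0) :
    (∀ p ∈ U, q₁ p * pd1 k₁ p + q₂ p * pd2 k₁ p = 0 ∧
              q₁ p * pd1 k₂ p + q₂ p * pd2 k₂ p = 0) ↔
    (∃ c : ℝ, ∀ p ∈ U, k₁ p + k₂ p = c) := by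
  have hsum : ∀ p ∈ U, DifferentiableAt ℝ (k₁ + k₂) p := fun p hp ↦ (hk₁ p hp).add (hk₂ p hp)
  change _ ↔ ∃ c : ℝ, ∀ p ∈ U, (k₁ + k₂) p = c
  rw [hU.exists_eq_const_iff_fderiv_eq_zero hUconn.isPreconnected hsum]
  refine forall₂_congr fun p hp ↦ ?_
  rw [fderiv_eq_zero_iff_pd1_pd2, pd1_add (hk₁ p hp) (hk₂ p hp), pd2_add (hk₁ p hp) (hk₂ p hp),
    codazzi₁ p hp, codazzi₂ p hp]
  exact orthogonality_iff_sum_eq_zero (hq₁ne p hp) (hq₂ne p hp)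

theorem stmt_0 (U : Set (ℝ × ℝ)) (hU : IsOpen U) (hUconn : IsConnected U)
    (k₁ k₂ q₁ q₂ : ℝ × ℝ → ℝ)
    (hk₁ : ∀ p ∈ U, DifferentiableAt ℝ k₁ p)
    (hk₂ : ∀ p ∈ U, DifferentiableAt ℝ k₂ p)
    (hq₁ : ∀ p ∈ U, DifferentiableAt ℝ q₁ p)
    (hq₂ : ∀ p ∈ U, DifferentiableAt ℝ q₂ p)
    (codazzi₁ : ∀ p ∈ U, pd2 k₁ p = q₁ p * (k₁ p - k₂ p))
    (codazzi₂ : ∀ p ∈ U, pd1 k₂ p = q₂ p * (k₁ p - k₂ p))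
    (hq₁ne : ∀ p ∈ U, q₁ p ≠ 0)
    (hq₂ne : ∀ p ∈ U, q₂ p ≠ 0) :
    (∀ p ∈ U, q₁ p * pd1 k₁ p + q₂ p * pd2 k₁ p = 0 ∧
              q₁ p * pd1 k₂ p + q₂ p * pd2 k₂ p = 0) ↔
    (∃ c : ℝ, ∀ p ∈ U, k₁ p + k₂ p = c) :=
  stmt_0_general U hU hUconn k₁ k₂ q₁ q₂ hk₁ hk₂ codazzi₁ codazzi₂ hq₁ne hq₂ne
end

section
/- Suppose q₁, q₂, k₁ and k₂ are all nonvanishing on U. Then the following are equivalent: (i) q₁·k₂²·∂₁k₁ + q₂·k₁²·∂₂k₁ = 0 and q₁·k₂²·∂₁k₂ + q₂·k₁²·∂₂k₂ = 0 hold at every point of U; (ii) the function 1/k₁ + 1/k₂ is constant on U. (Proposition 6: for a surface which is not a moulding surface, the spherical images of the nets corresponding to the lines of curvature of the central surfaces are both orthogonal if and only if the sum of the principal radii of curvature is constant.) -/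
theorem ContinuousLinearMap.eq_zero_iff_apply_one_zero_and_apply_zero_one
    {R M : Type*} [Semiring R] [TopologicalSpace R] [AddCommMonoid M] [TopologicalSpace M]
    [Module R M] (L : R × R →L[R] M) : L = 0 ↔ L (1, 0) = 0 ∧ L (0, 1) = 0 := by
  simp [ContinuousLinearMap.prod_ext_iff, ContinuousLinearMap.ext_ring_iff]

theorem fderiv_inv_add_inv_apply {E : Type*} [NormedAddCommGroup E] [NormedSpace ℝ E]
    {f g : E → ℝ} {p : E} (hf : DifferentiableAt ℝ f p) (hg : DifferentiableAt ℝ g p)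
    (hf₀ : f p ≠ 0) (hg₀ : g p ≠ 0) (v : E) :
    fderiv ℝ (fun x => 1 / f x + 1 / g x) p v =
      -(g p ^ 2 * fderiv ℝ f p v + f p ^ 2 * fderiv ℝ g p v) / (f p ^ 2 * g p ^ 2) := by
  have hf' := (hasDerivAt_inv hf₀).comp_hasFDerivAt p hf.hasFDerivAt
  have hg' := (hasDerivAt_inv hg₀).comp_hasFDerivAt p hg.hasFDerivAt
  have hsum : HasFDerivAt (fun x => (f x)⁻¹ + (g x)⁻¹) _ p := hf'.add hg'
  simp only [one_div, hsum.fderiv, add_apply, smul_apply, smul_eq_mul]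
  field_simp
  ring

theorem codazzi_conditions_iff_fderiv_inv_add_inv_eq_zero {k₁ k₂ q₁ q₂ : ℝ × ℝ → ℝ} {p : ℝ × ℝ}
    (hk₁ : DifferentiableAt ℝ k₁ p) (hk₂ : DifferentiableAt ℝ k₂ p)
    (codazzi₁ : pd2 k₁ p = q₁ p * (k₁ p - k₂ p)) (codazzi₂ : pd1 k₂ p = q₂ p * (k₁ p - k₂ p))
    (hq₁ : q₁ p ≠ 0) (hq₂ : q₂ p ≠ 0) (hk₁₀ : k₁ p ≠ 0) (hk₂₀ : k₂ p ≠ 0) :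
    (q₁ p * k₂ p ^ 2 * pd1 k₁ p + q₂ p * k₁ p ^ 2 * pd2 k₁ p = 0 ∧
      q₁ p * k₂ p ^ 2 * pd1 k₂ p + q₂ p * k₁ p ^ 2 * pd2 k₂ p = 0) ↔
    fderiv ℝ (fun x => 1 / k₁ x + 1 / k₂ x) p = 0 := by
  rw [ContinuousLinearMap.eq_zero_iff_apply_one_zero_and_apply_zero_one,
    fderiv_inv_add_inv_apply hk₁ hk₂ hk₁₀ hk₂₀, fderiv_inv_add_inv_apply hk₁ hk₂ hk₁₀ hk₂₀]
  change _ ↔ -(k₂ p ^ 2 * pd1 k₁ p + k₁ p ^ 2 * pd1 k₂ p) / _ = 0 ∧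
    -(k₂ p ^ 2 * pd2 k₁ p + k₁ p ^ 2 * pd2 k₂ p) / _ = 0
  have h₁ : q₁ p * k₂ p ^ 2 * pd1 k₁ p + q₂ p * k₁ p ^ 2 * pd2 k₁ p =
      q₁ p * (k₂ p ^ 2 * pd1 k₁ p + k₁ p ^ 2 * pd1 k₂ p) := by
    linear_combination q₂ p * k₁ p ^ 2 * codazzi₁ - q₁ p * k₁ p ^ 2 * codazzi₂
  have h₂ : q₁ p * k₂ p ^ 2 * pd1 k₂ p + q₂ p * k₁ p ^ 2 * pd2 k₂ p =
      q₂ p * (k₂ p ^ 2 * pd2 k₁ p + k₁ p ^ 2 * pd2 k₂ p) := by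
    linear_combination q₁ p * k₂ p ^ 2 * codazzi₂ - q₂ p * k₂ p ^ 2 * codazzi₁
  have hden : k₁ p ^ 2 * k₂ p ^ 2 ≠ 0 := by positivity
  simp only [h₁, h₂, mul_eq_zero, hq₁, hq₂, false_or, neg_div, neg_eq_zero, div_eq_zero_iff,
    hden, or_false]

theorem stmt_2_general (U : Set (ℝ × ℝ)) (hU : IsOpen U) (hUconn : IsConnected U)
    (k₁ k₂ q₁ q₂ : ℝ × ℝ → ℝ)
    (hk₁ : ∀ p ∈ U, DifferentiableAt ℝ k₁ p)
    (hk₂ : ∀ p ∈ U, DifferentiableAt ℝ k₂ p)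
    (codazzi₁ : ∀ p ∈ U, pd2 k₁ p = q₁ p * (k₁ p - k₂ p))
    (codazzi₂ : ∀ p ∈ U, pd1 k₂ p = q₂ p * (k₁ p - k₂ p))
    (hq₁ne : ∀ p ∈ U, q₁ p ≠ 0)
    (hq₂ne : ∀ p ∈ U, q₂ p ≠ 0)
    (hk₁ne : ∀ p ∈ U, k₁ p ≠ 0)
    (hk₂ne : ∀ p ∈ U, k₂ p ≠ 0) :
    (∀ p ∈ U, q₁ p * (k₂ p)^2 * pd1 k₁ p + q₂ p * (k₁ p)^2 * pd2 k₁ p = 0 ∧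
              q₁ p * (k₂ p)^2 * pd1 k₂ p + q₂ p * (k₁ p)^2 * pd2 k₂ p = 0) ↔
    (∃ c : ℝ, ∀ p ∈ U, 1 / k₁ p + 1 / k₂ p = c) := by
  have conditions_iff : ∀ p ∈ U, _ ↔ fderiv ℝ (fun x => 1 / k₁ x + 1 / k₂ x) p = 0 := fun p hp =>
    codazzi_conditions_iff_fderiv_inv_add_inv_eq_zero (hk₁ p hp) (hk₂ p hp) (codazzi₁ p hp)
      (codazzi₂ p hp) (hq₁ne p hp) (hq₂ne p hp) (hk₁ne p hp) (hk₂ne p hp)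
  constructor
  · intro h
    refine hU.exists_is_const_of_fderiv_eq_zero hUconn.isPreconnected (fun p hp => ?_)
      (fun p hp => (conditions_iff p hp).mp (h p hp))
    simp only [one_div]
    exact (((hk₁ p hp).fun_inv (hk₁ne p hp)).add
      ((hk₂ p hp).fun_inv (hk₂ne p hp))).differentiableWithinAt
  · rintro ⟨c, hc⟩ p hp
    refine (conditions_iff p hp).mpr ?_
    have hconst : (fun x => 1 / k₁ x + 1 / k₂ x) =ᶠ[nhds p] fun _ => c :=
      Filter.eventually_of_mem (hU.mem_nhds hp) hc
    rw [hconst.fderiv_eq, fderiv_const_apply]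

theorem stmt_2 (U : Set (ℝ × ℝ)) (hU : IsOpen U) (hUconn : IsConnected U)
    (k₁ k₂ q₁ q₂ : ℝ × ℝ → ℝ)
    (hk₁ : ∀ p ∈ U, DifferentiableAt ℝ k₁ p)
    (hk₂ : ∀ p ∈ U, DifferentiableAt ℝ k₂ p)
    (hq₁ : ∀ p ∈ U, DifferentiableAt ℝ q₁ p)
    (hq₂ : ∀ p ∈ U, DifferentiableAt ℝ q₂ p)
    (codazzi₁ : ∀ p ∈ U, pd2 k₁ p = q₁ p * (k₁ p - k₂ p))
    (codazzi₂ : ∀ p ∈ U, pd1 k₂ p = q₂ p * (k₁ p - k₂ p))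
    (hq₁ne : ∀ p ∈ U, q₁ p ≠ 0)
    (hq₂ne : ∀ p ∈ U, q₂ p ≠ 0)
    (hk₁ne : ∀ p ∈ U, k₁ p ≠ 0)
    (hk₂ne : ∀ p ∈ U, k₂ p ≠ 0) :
    (∀ p ∈ U, q₁ p * (k₂ p)^2 * pd1 k₁ p + q₂ p * (k₁ p)^2 * pd2 k₁ p = 0 ∧
              q₁ p * (k₂ p)^2 * pd1 k₂ p + q₂ p * (k₁ p)^2 * pd2 k₂ p = 0) ↔
    (∃ c : ℝ, ∀ p ∈ U, 1 / k₁ p + 1 / k₂ p = c) :=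
  stmt_2_general U hU hUconn k₁ k₂ q₁ q₂ hk₁ hk₂ codazzi₁ codazzi₂ hq₁ne hq₂ne hk₁ne hk₂ne
end

section
/- Suppose q₁ and q₂ are nonvanishing on U, and that k₂·q₁·∂₁k₁ + k₁·q₂·∂₂k₁ = 0 and k₂·q₁·∂₁k₂ + k₁·q₂·∂₂k₂ = 0 hold at every point of U. Then k₂·∂₁k₁ = −k₁·q₂·(k₁ − k₂) and k₁·∂₂k₂ = −k₂·q₁·(k₁ − k₂) at every point of U; consequently ∂₁(k₁·k₂) = 0 and ∂₂(k₁·k₂) = 0 on U. (The key computational step in the proof of Proposition 5(b).) -/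
theorem stmt_4 (U : Set (ℝ × ℝ)) (hU : IsOpen U) (hUconn : IsConnected U)
    (k₁ k₂ q₁ q₂ : ℝ × ℝ → ℝ)
    (hk₁ : ∀ p ∈ U, DifferentiableAt ℝ k₁ p)
    (hk₂ : ∀ p ∈ U, DifferentiableAt ℝ k₂ p)
    (hq₁ : ∀ p ∈ U, DifferentiableAt ℝ q₁ p)
    (hq₂ : ∀ p ∈ U, DifferentiableAt ℝ q₂ p)
    (codazzi₁ : ∀ p ∈ U, pd2 k₁ p = q₁ p * (k₁ p - k₂ p))
    (codazzi₂ : ∀ p ∈ U, pd1 k₂ p = q₂ p * (k₁ p - k₂ p))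
    (hq₁ne : ∀ p ∈ U, q₁ p ≠ 0)
    (hq₂ne : ∀ p ∈ U, q₂ p ≠ 0)
    (hconj₁ : ∀ p ∈ U, k₂ p * q₁ p * pd1 k₁ p + k₁ p * q₂ p * pd2 k₁ p = 0)
    (hconj₂ : ∀ p ∈ U, k₂ p * q₁ p * pd1 k₂ p + k₁ p * q₂ p * pd2 k₂ p = 0) :
    ∀ p ∈ U, (k₂ p * pd1 k₁ p = -k₁ p * q₂ p * (k₁ p - k₂ p) ∧
              k₁ p * pd2 k₂ p = -k₂ p * q₁ p * (k₁ p - k₂ p)) ∧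
             (pd1 (fun x => k₁ x * k₂ x) p = 0 ∧
              pd2 (fun x => k₁ x * k₂ x) p = 0) := by
  intro p hp
  have h1 := hconj₁ p hp
  have h2 := hconj₂ p hp
  have hc1 := codazzi₁ p hp
  have hc2 := codazzi₂ p hp
  have hq1 := hq₁ne p hp
  have hq2 := hq₂ne p hp
  have e1 : k₂ p * pd1 k₁ p = -k₁ p * q₂ p * (k₁ p - k₂ p) := by
    have : q₁ p * (k₂ p * pd1 k₁ p) = q₁ p * (-k₁ p * q₂ p * (k₁ p - k₂ p)) := by
      rw [hc1] at h1; ring_nf; ring_nf at h1; linarith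
    exact mul_left_cancel₀ hq1 this
  have e2 : k₁ p * pd2 k₂ p = -k₂ p * q₁ p * (k₁ p - k₂ p) := by
    have : q₂ p * (k₁ p * pd2 k₂ p) = q₂ p * (-k₂ p * q₁ p * (k₁ p - k₂ p)) := by
      rw [hc2] at h2; ring_nf; ring_nf at h2; linarith
    exact mul_left_cancel₀ hq2 this
  have hmul : fderiv ℝ (fun x => k₁ x * k₂ x) p =
      k₁ p • fderiv ℝ k₂ p + k₂ p • fderiv ℝ k₁ p :=
    fderiv_mul (hk₁ p hp) (hk₂ p hp)
  have hp1 : pd1 (fun x => k₁ x * k₂ x) p = k₁ p * pd1 k₂ p + k₂ p * pd1 k₁ p := by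
    simp [pd1, hmul]
  have hp2 : pd2 (fun x => k₁ x * k₂ x) p = k₁ p * pd2 k₂ p + k₂ p * pd2 k₁ p := by
    simp [pd2, hmul]
  refine ⟨⟨e1, e2⟩, ?_, ?_⟩
  · rw [hp1, hc2, e1]; ring
  · rw [hp2, hc1, e2]; ring
end

section
/- Let p ∈ U and suppose k₁(p) ≠ 0, k₁(p) ≠ k₂(p) and ∂₁k₁(p) ≠ 0. Let Q₁ := k₁·k₂/(k₁ − k₂), defined on the open set where k₁ ≠ k₂. Then k₁(p)·(∂₁k₁(p)·∂₂Q₁(p) − ∂₂k₁(p)·∂₁Q₁(p)) / ((k₁(p) − k₂(p))·∂₁k₁(p)) = 0 if and only if ∂₁k₁(p)·∂₂k₂(p) − ∂₂k₁(p)·∂₁k₂(p) = 0. (The computational core of Proposition 1 for the first central surface 𝔉⁽¹⁾: the isothermic condition ∇₁⁽¹⁾q₁⁽¹⁾ + ∇₂⁽¹⁾q₂⁽¹⁾ = 0 for the net cut out by the forms ω₁⁽¹⁾, ω₂⁽¹⁾ is equivalent to the vanishing of the Jacobian determinant of (k₁, k₂), i.e. to the surface being a W-surface; here q₁⁽¹⁾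 = Q₁ and q₂⁽¹⁾ = 0.) -/
theorem stmt_7 (U : Set (ℝ × ℝ)) (hU : IsOpen U)
    (k₁ k₂ : ℝ × ℝ → ℝ)
    (hk₁c : ContinuousOn k₁ U) (hk₂c : ContinuousOn k₂ U)
    (hk₁ : ∀ p ∈ U, DifferentiableAt ℝ k₁ p)
    (hk₂ : ∀ p ∈ U, DifferentiableAt ℝ k₂ p)
    (p : ℝ × ℝ) (hp : p ∈ U)
    (hk₁ne : k₁ p ≠ 0) (hne : k₁ p ≠ k₂ p) (hd₁k₁ : pd1 k₁ p ≠ 0)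
    (Q₁ : ℝ × ℝ → ℝ) (hQ₁ : ∀ x, k₁ x ≠ k₂ x → Q₁ x = k₁ x * k₂ x / (k₁ x - k₂ x)) :
    k₁ p * (pd1 k₁ p * pd2 Q₁ p - pd2 k₁ p * pd1 Q₁ p) /
      ((k₁ p - k₂ p) * pd1 k₁ p) = 0 ↔
    pd1 k₁ p * pd2 k₂ p - pd2 k₁ p * pd1 k₂ p = 0 := by
  have hdiff₁ := (hk₁ p hp).hasFDerivAt
  have hdiff₂ := (hk₂ p hp).hasFDerivAt
  have hvne : k₁ p - k₂ p ≠ 0 := sub_ne_zero_of_ne hne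
  -- the set where k₁ ≠ k₂ (inside U) is open
  have hopen : IsOpen (U ∩ (fun x => k₁ x - k₂ x) ⁻¹' {(0:ℝ)}ᶜ) :=
    (hk₁c.sub hk₂c).isOpen_inter_preimage hU isOpen_compl_singleton
  have hmem : (U ∩ (fun x => k₁ x - k₂ x) ⁻¹' {(0:ℝ)}ᶜ) ∈ nhds p :=
    hopen.mem_nhds ⟨hp, hvne⟩
  have heq : Q₁ =ᶠ[nhds p] fun x => k₁ x * k₂ x * (k₁ x - k₂ x)⁻¹ := by
    filter_upwards [hmem] with x hx
    rw [hQ₁ x (sub_ne_zero.mp hx.2), div_eq_mul_inv]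
  have hinv : HasFDerivAt (fun x => (k₁ x - k₂ x)⁻¹)
      ((-((k₁ p - k₂ p) ^ 2)⁻¹) • (fderiv ℝ k₁ p - fderiv ℝ k₂ p)) p :=
    (hasDerivAt_inv hvne).comp_hasFDerivAt p (hdiff₁.sub hdiff₂)
  have hg : HasFDerivAt (fun x => k₁ x * k₂ x * (k₁ x - k₂ x)⁻¹)
      ((k₁ p * k₂ p) • ((-((k₁ p - k₂ p) ^ 2)⁻¹) • (fderiv ℝ k₁ p - fderiv ℝ k₂ p))
        + (k₁ p - k₂ p)⁻¹ • (k₁ p • fderiv ℝ k₂ p + k₂ p • fderiv ℝ k₁ p)) p :=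
    (hdiff₁.mul hdiff₂).mul hinv
  have hfd : fderiv ℝ Q₁ p =
      (k₁ p * k₂ p) • ((-((k₁ p - k₂ p) ^ 2)⁻¹) • (fderiv ℝ k₁ p - fderiv ℝ k₂ p))
        + (k₁ p - k₂ p)⁻¹ • (k₁ p • fderiv ℝ k₂ p + k₂ p • fderiv ℝ k₁ p) := by
    rw [heq.fderiv_eq]
    exact hg.fderiv
  have hQ1 : pd1 Q₁ p = (k₁ p * k₂ p) * ((-((k₁ p - k₂ p) ^ 2)⁻¹) * (pd1 k₁ p - pd1 k₂ p))
      + (k₁ p - k₂ p)⁻¹ * (k₁ p * pd1 k₂ p + k₂ p * pd1 k₁ p) := by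
    simp [pd1, hfd]; ring
  have hQ2 : pd2 Q₁ p = (k₁ p * k₂ p) * ((-((k₁ p - k₂ p) ^ 2)⁻¹) * (pd2 k₁ p - pd2 k₂ p))
      + (k₁ p - k₂ p)⁻¹ * (k₁ p * pd2 k₂ p + k₂ p * pd2 k₁ p) := by
    simp [pd2, hfd]; ring
  set u := k₁ p
  set v := k₂ p
  set a := pd1 k₁ p
  set b := pd2 k₁ p
  set c := pd1 k₂ p
  set d := pd2 k₂ p
  have key : u * (a * pd2 Q₁ p - b * pd1 Q₁ p) / ((u - v) * a)
      = u ^ 3 * (a * d - b * c) / ((u - v) ^ 3 * a) := by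
    rw [hQ1, hQ2]
    field_simp
    ring
  rw [key, div_eq_zero_iff]
  have hden : (u - v) ^ 3 * a ≠ 0 := mul_ne_zero (pow_ne_zero _ hvne) hd₁k₁
  have hu3 : u ^ 3 ≠ 0 := pow_ne_zero _ hk₁ne
  constructor
  · rintro (h | h)
    · rcases mul_eq_zero.mp h with h | h
      · exact absurd h hu3
      · exact h
    · exact absurd h hden
  · intro h
    left
    rw [h, mul_zero]
end

section
/- Let p ∈ U and suppose k₂(p) ≠ 0, k₁(p) ≠ k₂(p) and ∂₂k₂(p) ≠ 0. Let Q₂ := k₁·k₂/(k₁ − k₂), defined on the open set where k₁ ≠ k₂. Then k₂(p)·(∂₂k₂(p)·∂₁Q₂(p) − ∂₁k₂(p)·∂₂Q₂(p)) / ((k₂(p) − k₁(p))·∂₂k₂(p)) = 0 if and only if ∂₁k₁(p)·∂₂k₂(p) − ∂₂k₁(p)·∂₁k₂(p) = 0. (The computational core of Proposition 1 for the second central surface 𝔉⁽²⁾: the isothermic condition ∇₁⁽²⁾q₁⁽²⁾ + ∇₂⁽²⁾q₂⁽²⁾ = 0 for the net cut out by the forms ω₁⁽²⁾, ω₂⁽²⁾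 is equivalent to the vanishing of the Jacobian determinant of (k₁, k₂), i.e. to the surface being a W-surface; here q₁⁽²⁾ = 0 and q₂⁽²⁾ = Q₂.) -/
theorem stmt_8 (U : Set (ℝ × ℝ)) (hU : IsOpen U)
    (k₁ k₂ : ℝ × ℝ → ℝ)
    (hk₁c : ContinuousOn k₁ U) (hk₂c : ContinuousOn k₂ U)
    (hk₁ : ∀ p ∈ U, DifferentiableAt ℝ k₁ p)
    (hk₂ : ∀ p ∈ U, DifferentiableAt ℝ k₂ p)
    (p : ℝ × ℝ) (hp : p ∈ U)
    (hk₂ne : k₂ p ≠ 0) (hne : k₁ p ≠ k₂ p) (hd₂k₂ : pd2 k₂ p ≠ 0)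
    (Q₂ : ℝ × ℝ → ℝ) (hQ₂ : ∀ x, k₁ x ≠ k₂ x → Q₂ x = k₁ x * k₂ x / (k₁ x - k₂ x)) :
    k₂ p * (pd2 k₂ p * pd1 Q₂ p - pd1 k₂ p * pd2 Q₂ p) /
      ((k₂ p - k₁ p) * pd2 k₂ p) = 0 ↔
    pd1 k₁ p * pd2 k₂ p - pd2 k₁ p * pd1 k₂ p = 0 := by
  have hd1 := hk₁ p hp
  have hd2 := hk₂ p hp
  have hne' : k₁ p - k₂ p ≠ 0 := sub_ne_zero.mpr hne
  set L1 := fderiv ℝ k₁ p with hL1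
  set L2 := fderiv ℝ k₂ p with hL2
  have h1 : HasFDerivAt k₁ L1 p := hd1.hasFDerivAt
  have h2 : HasFDerivAt k₂ L2 p := hd2.hasFDerivAt
  have hsub : HasFDerivAt (fun x => k₁ x - k₂ x) (L1 - L2) p := h1.sub h2
  have hinv : HasFDerivAt (fun x => (k₁ x - k₂ x)⁻¹)
      ((-((k₁ p - k₂ p) ^ 2)⁻¹ : ℝ) • (L1 - L2)) p :=
    (hasDerivAt_inv hne').comp_hasFDerivAt p hsub
  have hmul : HasFDerivAt (fun x => k₁ x * k₂ x) ((k₁ p) • L2 + (k₂ p) • L1) p :=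
    h1.mul h2
  have hD : HasFDerivAt (fun x => (k₁ x * k₂ x) * (k₁ x - k₂ x)⁻¹)
      ((k₁ p * k₂ p) • ((-((k₁ p - k₂ p) ^ 2)⁻¹ : ℝ) • (L1 - L2))
        + ((k₁ p - k₂ p)⁻¹) • ((k₁ p) • L2 + (k₂ p) • L1)) p := hmul.mul hinv
  -- Q₂ agrees with this expression near p
  have hW : IsOpen {x | x ∈ U ∧ (fun y => k₁ y - k₂ y) x ∈ ({0}ᶜ : Set ℝ)} := by
    have := (hk₁c.sub hk₂c).isOpen_inter_preimage hU (isOpen_compl_singleton (x := (0:ℝ)))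
    simpa [Set.inter_def, Set.preimage] using this
  have hmem : {x | x ∈ U ∧ (fun y => k₁ y - k₂ y) x ∈ ({0}ᶜ : Set ℝ)} ∈ nhds p :=
    hW.mem_nhds ⟨hp, by simpa using hne'⟩
  have heq : Q₂ =ᶠ[nhds p] fun x => (k₁ x * k₂ x) * (k₁ x - k₂ x)⁻¹ := by
    filter_upwards [hmem] with x hx
    rw [hQ₂ x (sub_ne_zero.mp (by simpa using hx.2)), div_eq_mul_inv]
  have hQ : HasFDerivAt Q₂
      ((k₁ p * k₂ p) • ((-((k₁ p - k₂ p) ^ 2)⁻¹ : ℝ) • (L1 - L2))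
        + ((k₁ p - k₂ p)⁻¹) • ((k₁ p) • L2 + (k₂ p) • L1)) p :=
    hD.congr_of_eventuallyEq heq
  have hfQ := hQ.fderiv
  -- express pd1/pd2 of Q₂
  set a := k₁ p
  set b := k₂ p
  set A1 := L1 (1, 0)
  set A2 := L1 (0, 1)
  set B1 := L2 (1, 0)
  set B2 := L2 (0, 1)
  have hP1 : pd1 Q₂ p = (a * b) * (-((a - b) ^ 2)⁻¹ * (A1 - B1)) + (a - b)⁻¹ * (a * B1 + b * A1) := by
    simp [pd1, hfQ, ContinuousLinearMap.add_apply, ContinuousLinearMap.smul_apply,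
      ContinuousLinearMap.sub_apply, smul_eq_mul]
    ring
  have hP2 : pd2 Q₂ p = (a * b) * (-((a - b) ^ 2)⁻¹ * (A2 - B2)) + (a - b)⁻¹ * (a * B2 + b * A2) := by
    simp [pd2, hfQ, ContinuousLinearMap.add_apply, ContinuousLinearMap.smul_apply,
      ContinuousLinearMap.sub_apply, smul_eq_mul]
    ring
  have hpa1 : pd1 k₁ p = A1 := rfl
  have hpa2 : pd2 k₁ p = A2 := rfl
  have hpb1 : pd1 k₂ p = B1 := rfl
  have hpb2 : pd2 k₂ p = B2 := rfl
  have hB2 : B2 ≠ 0 := hd₂k₂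
  rw [hP1, hP2, hpa1, hpa2, hpb1, hpb2]
  have hba : b - a ≠ 0 := sub_ne_zero.mpr (Ne.symm hne)
  have key : b * (B2 * ((a * b) * (-((a - b) ^ 2)⁻¹ * (A1 - B1)) + (a - b)⁻¹ * (a * B1 + b * A1))
        - B1 * ((a * b) * (-((a - b) ^ 2)⁻¹ * (A2 - B2)) + (a - b)⁻¹ * (a * B2 + b * A2))) /
      ((b - a) * B2)
      = (-(b ^ 3) / ((a - b) ^ 2 * (b - a) * B2)) * (A1 * B2 - A2 * B1) := by
    field_simp
    ring
  rw [key, mul_eq_zero]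
  have hc : -(b ^ 3) / ((a - b) ^ 2 * (b - a) * B2) ≠ 0 := by
    apply div_ne_zero
    · simpa using pow_ne_zero 3 hk₂ne
    · exact mul_ne_zero (mul_ne_zero (pow_ne_zero 2 hne') hba) hB2
  constructor
  · rintro (h | h)
    · exact absurd h hc
    · exact h
  · exact fun h => Or.inr h
end

section
/- Suppose that at every point of U one has k₁ ≠ 0, k₂ ≠ 0, k₁ ≠ k₂, ∂₁k₁ ≠ 0 and ∂₂k₂ ≠ 0, and let Q := k₁·k₂/(k₁ − k₂). Then the following are equivalent on U: (i) k₁·(∂₁k₁·∂₂Q − ∂₂k₁·∂₁Q)/((k₁ − k₂)·∂₁k₁) = 0 at every point of U; (ii) k₂·(∂₂k₂·∂₁Q − ∂₁k₂·∂₂Q)/((k₂ − k₁)·∂₂k₂) = 0 at every point of U; (iii) ∂₁k₁·∂₂k₂ − ∂₂k₁·∂₁k₂ = 0 at every point of U. (Corollary 2: the isothermic condition for the distinguished net on the first central surface, the isothermic condition for the distinguished net on the second central surface, and the W-surface condition are pairwise equivalent.) -/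
/-!
Both isothermic conditions are multiples of the Jacobian of `(k₁, k₂)`. Indeed
`dQ = -(k₂ / (k₁ - k₂))² dk₁ + (k₁ / (k₁ - k₂))² dk₂`, so the Jacobian of `(k₁, Q)` is
`(k₁ / (k₁ - k₂))²` times that of `(k₁, k₂)` and the Jacobian of `(Q, k₂)` is
`-(k₂ / (k₁ - k₂))²` times it; all remaining factors are nonzero by hypothesis.
-/

noncomputable def jac (f g : ℝ × ℝ → ℝ) (p : ℝ × ℝ) : ℝ :=
  pd1 f p * pd2 g p - pd2 f p * pd1 g p

theorem hasFDerivAt_mul_div_sub {E : Type*} [NormedAddCommGroup E] [NormedSpace ℝ E]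
    {k₁ k₂ : E → ℝ} {k₁' k₂' : E →L[ℝ] ℝ} {p : E}
    (h₁ : HasFDerivAt k₁ k₁' p) (h₂ : HasFDerivAt k₂ k₂' p) (hne : k₁ p ≠ k₂ p) :
    HasFDerivAt (fun x => k₁ x * k₂ x / (k₁ x - k₂ x))
      (-(k₂ p / (k₁ p - k₂ p)) ^ 2 • k₁' + (k₁ p / (k₁ p - k₂ p)) ^ 2 • k₂') p := by
  have hD : k₁ p - k₂ p ≠ 0 := sub_ne_zero.2 hne
  have hinv := (hasDerivAt_inv hD).comp_hasFDerivAt p (h₁.fun_sub h₂)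
  simp only [div_eq_mul_inv]
  refine ((h₁.fun_mul h₂).fun_mul hinv).congr_fderiv ?_
  ext v
  simp only [add_apply, smul_apply, sub_apply, Function.comp_apply, smul_eq_mul]
  field_simp
  ring

section Jacobian

variable {f g h : ℝ × ℝ → ℝ} {p : ℝ × ℝ} {a b : ℝ}

theorem pd1_of_fderiv_eq (hg : fderiv ℝ g p = a • fderiv ℝ f p + b • fderiv ℝ h p) :
    pd1 g p = a * pd1 f p + b * pd1 h p := by
  simp [pd1, hg]

theorem pd2_of_fderiv_eq (hg : fderiv ℝ g p = a • fderiv ℝ f p + b • fderiv ℝ h p) :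
    pd2 g p = a * pd2 f p + b * pd2 h p := by
  simp [pd2, hg]

theorem jac_left_of_fderiv_eq (hg : fderiv ℝ g p = a • fderiv ℝ f p + b • fderiv ℝ h p) :
    jac f g p = b * jac f h p := by
  simp only [jac, pd1_of_fderiv_eq hg, pd2_of_fderiv_eq hg]
  ring

theorem jac_right_of_fderiv_eq (hg : fderiv ℝ g p = a • fderiv ℝ f p + b • fderiv ℝ h p) :
    jac g h p = a * jac f h p := by
  simp only [jac, pd1_of_fderiv_eq hg, pd2_of_fderiv_eq hg]
  ring

end Jacobian

theorem stmt_9_general (U : Set (ℝ × ℝ))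
    (k₁ k₂ : ℝ × ℝ → ℝ)
    (hk₁ : ∀ p ∈ U, DifferentiableAt ℝ k₁ p)
    (hk₂ : ∀ p ∈ U, DifferentiableAt ℝ k₂ p)
    (hk₁ne : ∀ p ∈ U, k₁ p ≠ 0)
    (hk₂ne : ∀ p ∈ U, k₂ p ≠ 0)
    (hne : ∀ p ∈ U, k₁ p ≠ k₂ p)
    (hd₁k₁ : ∀ p ∈ U, pd1 k₁ p ≠ 0)
    (hd₂k₂ : ∀ p ∈ U, pd2 k₂ p ≠ 0)
    (Q : ℝ × ℝ → ℝ) (hQ : ∀ x, Q x = k₁ x * k₂ x / (k₁ x - k₂ x)) :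
    ((∀ p ∈ U, k₁ p * (pd1 k₁ p * pd2 Q p - pd2 k₁ p * pd1 Q p) /
        ((k₁ p - k₂ p) * pd1 k₁ p) = 0) ↔
     (∀ p ∈ U, k₂ p * (pd2 k₂ p * pd1 Q p - pd1 k₂ p * pd2 Q p) /
        ((k₂ p - k₁ p) * pd2 k₂ p) = 0)) ∧
    ((∀ p ∈ U, k₁ p * (pd1 k₁ p * pd2 Q p - pd2 k₁ p * pd1 Q p) /
        ((k₁ p - k₂ p) * pd1 k₁ p) = 0) ↔
     (∀ p ∈ U, pd1 k₁ p * pd2 k₂ p - pd2 k₁ p * pd1 k₂ p = 0)) := by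
  have hdQ : ∀ p ∈ U, fderiv ℝ Q p =
      -(k₂ p / (k₁ p - k₂ p)) ^ 2 • fderiv ℝ k₁ p + (k₁ p / (k₁ p - k₂ p)) ^ 2 • fderiv ℝ k₂ p :=
    fun p hp => funext hQ ▸
      (hasFDerivAt_mul_div_sub (hk₁ p hp).hasFDerivAt (hk₂ p hp).hasFDerivAt (hne p hp)).fderiv
  have hsub : ∀ p ∈ U, k₁ p - k₂ p ≠ 0 := fun p hp => sub_ne_zero.2 (hne p hp)
  have first : ∀ p ∈ U,
      k₁ p * jac k₁ Q p / ((k₁ p - k₂ p) * pd1 k₁ p) = 0 ↔ jac k₁ k₂ p = 0 := fun p hp => by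
    rw [jac_left_of_fderiv_eq (hdQ p hp)]
    simp [hk₁ne p hp, hd₁k₁ p hp, hsub p hp]
  have second : ∀ p ∈ U, k₂ p * (pd2 k₂ p * pd1 Q p - pd1 k₂ p * pd2 Q p) /
      ((k₂ p - k₁ p) * pd2 k₂ p) = 0 ↔ jac k₁ k₂ p = 0 := fun p hp => by
    rw [show pd2 k₂ p * pd1 Q p - pd1 k₂ p * pd2 Q p = jac Q k₂ p by rw [jac]; ring,
      jac_right_of_fderiv_eq (hdQ p hp)]
    simp [hk₂ne p hp, hd₂k₂ p hp, hsub p hp, sub_eq_zero, (hne p hp).symm]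
  exact ⟨forall₂_congr fun p hp => (first p hp).trans (second p hp).symm, forall₂_congr first⟩

theorem stmt_9 (U : Set (ℝ × ℝ)) (hU : IsOpen U)
    (k₁ k₂ : ℝ × ℝ → ℝ)
    (hk₁ : ∀ p ∈ U, DifferentiableAt ℝ k₁ p)
    (hk₂ : ∀ p ∈ U, DifferentiableAt ℝ k₂ p)
    (hk₁ne : ∀ p ∈ U, k₁ p ≠ 0)
    (hk₂ne : ∀ p ∈ U, k₂ p ≠ 0)
    (hne : ∀ p ∈ U, k₁ p ≠ k₂ p)
    (hd₁k₁ : ∀ p ∈ U, pd1 k₁ p ≠ 0)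
    (hd₂k₂ : ∀ p ∈ U, pd2 k₂ p ≠ 0)
    (Q : ℝ × ℝ → ℝ) (hQ : ∀ x, Q x = k₁ x * k₂ x / (k₁ x - k₂ x)) :
    ((∀ p ∈ U, k₁ p * (pd1 k₁ p * pd2 Q p - pd2 k₁ p * pd1 Q p) /
        ((k₁ p - k₂ p) * pd1 k₁ p) = 0) ↔
     (∀ p ∈ U, k₂ p * (pd2 k₂ p * pd1 Q p - pd1 k₂ p * pd2 Q p) /
        ((k₂ p - k₁ p) * pd2 k₂ p) = 0)) ∧
    ((∀ p ∈ U, k₁ p * (pd1 k₁ p * pd2 Q p - pd2 k₁ p * pd1 Q p) /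
        ((k₁ p - k₂ p) * pd1 k₁ p) = 0) ↔
     (∀ p ∈ U, pd1 k₁ p * pd2 k₂ p - pd2 k₁ p * pd1 k₂ p = 0)) :=
  stmt_9_general U k₁ k₂ hk₁ hk₂ hk₁ne hk₂ne hne hd₁k₁ hd₂k₂ Q hQ
end
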